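/- Let S be an inverse semigroup and θ a congruence on S. Then θ is an almost Billhardt (respectively, split almost Billhardt) congruence on S if and only if there exists an inverse subsemigroup S̃ of Ω(S,θ) containing Π(S) such that the restriction of Ω(θ) to S̃ is a Billhardt (respectively, split Billhardt) congruence on S̃. -/
import Mathlib


/-- An inverse semigroup: a semigroup in which every element `a` has a unique
inverse `a⁻¹` satisfying `a * a⁻¹ * a = a` and `a⁻¹ * a * a⁻¹ = a⁻¹`. -/
class InverseSemigroup (S : Type*) extends Semigroup S, Inv S where
  mul_inv_mul : ∀ a : S, a * a⁻¹ * a = a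
  inv_mul_inv : ∀ a : S, a⁻¹ * a * a⁻¹ = a⁻¹
  inv_unique : ∀ {a b : S}, a * b * a = a → b * a * b = b → b = a⁻¹

/-- The set of idempotents `E(T)` of a `Mul`-structure. -/
def idemSet (T : Type*) [Mul T] : Set T := {e | e * e = e}

/-- `ran t = t * t⁻¹`. -/
def iran {T : Type*} [Mul T] [Inv T] (t : T) : T := t * t⁻¹

/-- `dom t = t⁻¹ * t`. -/
def idom {T : Type*} [Mul T] [Inv T] (t : T) : T := t⁻¹ * t

/-- The natural partial order: `a ≤ b` iff `a = e * b` for some idempotent `e`. -/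
def nle {T : Type*} [Mul T] (a b : T) : Prop := ∃ e ∈ idemSet T, a = e * b

/-- `b` is an inverse of `a`. -/
def IsInvPair {T : Type*} [Mul T] (a b : T) : Prop := a * b * a = a ∧ b * a * b = b

/-- An action of `T` on `K` by endomorphisms. -/
def IsAction {K T : Type*} [Mul K] [Mul T] (act : T → K → K) : Prop :=
  (∀ t a b, act t (a * b) = act t a * act t b) ∧
  (∀ t u a, act (t * u) a = act t (act u a))

/-- `ε : K → T` is a (surjective) homomorphism from `K` onto the semilattice
of idempotents `E(T)` of `T`. -/
def IsSurjHomOntoE {K T : Type*} [Mul K] [Mul T] (ε : K → T) : Prop :=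
  (∀ a b, ε (a * b) = ε a * ε b) ∧ (∀ a, ε a ∈ idemSet T) ∧
  (∀ e ∈ idemSet T, ∃ a, ε a = e)

/-- Condition (AFR): `e · a = a` iff `ε a ≤ e`, for all `a ∈ K`, `e ∈ E(T)`. -/
def AFR {K T : Type*} [Mul K] [Mul T] (act : T → K → K) (ε : K → T) : Prop :=
  ∀ (a : K), ∀ e ∈ idemSet T, (act e a = a ↔ nle (ε a) e)

/-- A bitranslation of a semigroup `S`: a linked pair `(l, r)` of a left
translation and a right translation, written `ω s := l s`, `s ω := r s`. -/
@[ext]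
structure Bitrans (S : Type*) [Mul S] where
  l : S → S
  r : S → S
  l_mul : ∀ s t : S, l (s * t) = l s * t
  r_mul : ∀ s t : S, r (s * t) = s * r t
  linked : ∀ s t : S, s * l t = r s * t

namespace Bitrans

variable {S : Type*} [Mul S]

/-- Product of bitranslations: `(ωω')s = ω(ω's)` and `s(ωω') = (sω)ω'`. -/
instance : Mul (Bitrans S) where
  mul ω ω' :=
    { l := fun s => ω.l (ω'.l s)
      r := fun s => ω'.r (ω.r s)
      l_mul := fun s t => by
        show ω.l (ω'.l (s * t)) = ω.l (ω'.l s) * t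
        rw [ω'.l_mul, ω.l_mul]
      r_mul := fun s t => by
        show ω'.r (ω.r (s * t)) = s * ω'.r (ω.r t)
        rw [ω.r_mul, ω'.r_mul]
      linked := fun s t => by
        show s * ω.l (ω'.l t) = ω'.r (ω.r s) * t
        rw [ω.linked, ω'.linked] }

/-- The translational hull `Ω(S)` (all bitranslations) is a semigroup. -/
instance : Semigroup (Bitrans S) where
  mul_assoc a b c := by ext s <;> rfl

end Bitrans

/-- The inner bitranslation `π_s` induced by `s`. -/
def innerBitrans {S : Type*} [Semigroup S] (s : S) : Bitrans S where
  l := fun x => s * x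
  r := fun x => x * s
  l_mul := fun x y => (mul_assoc s x y).symm
  r_mul := fun x y => mul_assoc x y s
  linked := fun x y => (mul_assoc x s y).symm

/-- `Π(S)`, the set of inner bitranslations of `S`. -/
def innerSet (S : Type*) [Semigroup S] : Set (Bitrans S) :=
  Set.range (innerBitrans (S := S))

/-- A bitranslation of `S` respects the congruence `θ`. -/
def RespectsCon {S : Type*} [Mul S] (θ : Con S) (ω : Bitrans S) : Prop :=
  ∀ a b : S, θ a b → θ (ω.l a) (ω.l b) ∧ θ (ω.r a) (ω.r b)

/-- The bitranslation of `S/θ` induced by `ω` is the inner bitranslation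
induced by some `u ∈ S/θ`. -/
def InducedInnerCon {S : Type*} [Mul S] (θ : Con S) (ω : Bitrans S) : Prop :=
  ∃ u : θ.Quotient, ∀ s : S,
    ((ω.l s : S) : θ.Quotient) = u * (s : θ.Quotient) ∧
    ((ω.r s : S) : θ.Quotient) = (s : θ.Quotient) * u

/-- The translational hull `Ω(S, θ)` of the normal extension `(S, θ)`: all
bitranslations of `S` respecting `θ` whose induced bitranslation on `S/θ`
is inner. -/
def OmegaNE {S : Type*} [Mul S] (θ : Con S) : Set (Bitrans S) :=
  {ω | RespectsCon θ ω ∧ InducedInnerCon θ ω}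

/-- The congruence `Ω(θ)` on `Ω(S, θ)`: `ω Ω(θ) ω'` iff `ωs θ ω's` and
`sω θ sω'` for every `s ∈ S`. -/
def OmegaCon {S : Type*} [Mul S] (θ : Con S) (ω ω' : Bitrans S) : Prop :=
  ∀ s : S, θ (ω.l s) (ω'.l s) ∧ θ (ω.r s) (ω'.r s)

/-- The natural partial order on the inverse semigroup `Ω(S, θ)`:
`x ≤ y` iff `x = e * y` for some idempotent `e` of `Ω(S, θ)`. -/
def OmegaLe {S : Type*} [Mul S] (θ : Con S) (x y : Bitrans S) : Prop :=
  ∃ e ∈ OmegaNE θ, e * e = e ∧ x = e * y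

/-- The generating set `Π(S) ∪ ξ(S/θ)` of the inverse subsemigroup `S̄`
(together with the inverses of the elements `ξ(t)`). -/
def SbarGen {S : Type*} [Semigroup S] (θ : Con S)
    (ξ : θ.Quotient → Bitrans S) : Set (Bitrans S) :=
  innerSet S ∪ Set.range ξ ∪ {ω | ∃ t : θ.Quotient, IsInvPair (ξ t) ω}

/-- The inverse subsemigroup `S̄` of `Ω(S,θ)` generated by `Π(S) ∪ ξ(S/θ)`. -/
def Sbar {S : Type*} [Semigroup S] (θ : Con S)
    (ξ : θ.Quotient → Bitrans S) : Subsemigroup (Bitrans S) :=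
  Subsemigroup.closure (SbarGen θ ξ)

/-- `ξ : S/θ → Ω(S,θ)` is an almost Billhardt transversal to `θ`:
(B1) `(ξ t)^↓` is the inner bitranslation of `S/θ` induced by `t`, and
(B2) `ξ(t)⁻¹ ξ(t) ≥ ω⁻¹ ω` for every `ω ∈ S̄ \ ξ(S/θ)` with
`ω^↓ = ω_t^{S/θ}`. -/
def IsAlmostBillhardt {S : Type*} [Semigroup S] (θ : Con S)
    (ξ : θ.Quotient → Bitrans S) : Prop :=
  -- `ξ` maps into `Ω(S,θ)`
  (∀ t : θ.Quotient, RespectsCon θ (ξ t)) ∧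
  -- (B1)
  (∀ (t : θ.Quotient) (s : S),
      (((ξ t).l s : S) : θ.Quotient) = t * (s : θ.Quotient) ∧
      (((ξ t).r s : S) : θ.Quotient) = (s : θ.Quotient) * t) ∧
  -- (B2)
  (∀ ω ∈ Sbar θ ξ, ω ∉ Set.range ξ →
      ∀ t : θ.Quotient,
        (∀ s : S, ((ω.l s : S) : θ.Quotient) = t * (s : θ.Quotient) ∧
            ((ω.r s : S) : θ.Quotient) = (s : θ.Quotient) * t) →
        ∀ ξi ωi : Bitrans S, IsInvPair (ξ t) ξi → IsInvPair ω ωi →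
          OmegaLe θ (ωi * ω) (ξi * ξ t))

/-- The Kernel of the congruence `θ`: all elements `θ`-related to an
idempotent. -/
def KerCon {S : Type*} [Mul S] (θ : Con S) : Set S :=
  {s | ∃ e : S, e * e = e ∧ θ s e}

/-- `St` is an inverse subsemigroup of `Ω(S, θ)` containing `Π(S)`. -/
def IsInvSubOmega {S : Type*} [Semigroup S] (θ : Con S)
    (St : Set (Bitrans S)) : Prop :=
  St ⊆ OmegaNE θ ∧ innerSet S ⊆ St ∧
  (∀ x ∈ St, ∀ y ∈ St, x * y ∈ St) ∧
  (∀ x ∈ St, ∃ y ∈ St, IsInvPair x y)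

/-- The restriction of `Ω(θ)` to `St` is a Billhardt congruence: there is a
transversal `ζ` (constant on `Ω(θ)`-classes, picking a representative in each
class) with `ζ(t)⁻¹ ζ(t) ≥ u⁻¹ u` for every `u ∈ St` in the class `t`. -/
def IsBillhardtOn {S : Type*} [Mul S] (θ : Con S) (St : Set (Bitrans S))
    (ζ : Bitrans S → Bitrans S) : Prop :=
  (∀ u ∈ St, ζ u ∈ St ∧ OmegaCon θ (ζ u) u) ∧
  (∀ u ∈ St, ∀ v ∈ St, OmegaCon θ u v → ζ u = ζ v) ∧
  (∀ u ∈ St, ∀ ui ζi : Bitrans S, IsInvPair u ui → IsInvPair (ζ u) ζi →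
      ∃ e ∈ St, e * e = e ∧ ui * u = e * (ζi * ζ u))

section InvLemmas

namespace InverseSemigroup

variable {T : Type*} [InverseSemigroup T]

lemma mim (a : T) : a * a⁻¹ * a = a := InverseSemigroup.mul_inv_mul a
lemma imi (a : T) : a⁻¹ * a * a⁻¹ = a⁻¹ := InverseSemigroup.inv_mul_inv a

lemma mimn (a : T) : a * (a⁻¹ * a) = a := by rw [← mul_assoc, mim]
lemma imin (a : T) : a⁻¹ * (a * a⁻¹) = a⁻¹ := by rw [← mul_assoc, imi]

lemma mim' (a z : T) : a * (a⁻¹ * (a * z)) = a * z := by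
  have h := congrArg (· * z) (mim a)
  simp only [mul_assoc] at h
  exact h

lemma imi' (a z : T) : a⁻¹ * (a * (a⁻¹ * z)) = a⁻¹ * z := by
  have h := congrArg (· * z) (imi a)
  simp only [mul_assoc] at h
  exact h

lemma inv_inv' (a : T) : a⁻¹⁻¹ = a := (inv_unique (imi a) (mim a)).symm

lemma idem_inv {e : T} (he : e * e = e) : e⁻¹ = e := by
  have h : e * e * e = e := by rw [he, he]
  exact (inv_unique h h).symm

lemma ran_idem (a : T) : (a * a⁻¹) * (a * a⁻¹) = a * a⁻¹ := by
  rw [← mul_assoc, mim]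

lemma dom_idem (a : T) : (a⁻¹ * a) * (a⁻¹ * a) = a⁻¹ * a := by
  rw [← mul_assoc, imi]

lemma idem_mul_idem {e f : T} (he : e * e = e) (hf : f * f = f) :
    (e * f) * (e * f) = e * f := by
  have he' : ∀ z : T, e * (e * z) = e * z := fun z => by rw [← mul_assoc, he]
  have hf' : ∀ z : T, f * (f * z) = f * z := fun z => by rw [← mul_assoc, hf]
  have h1 : (e * f) * (f * (e * f)⁻¹ * e) * (e * f) = e * f := by
    have m := mim (e * f)
    simp only [mul_assoc] at m ⊢
    rw [hf', he']
    exact m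
  have h2 : (f * (e * f)⁻¹ * e) * (e * f) * (f * (e * f)⁻¹ * e) = f * (e * f)⁻¹ * e := by
    have m := congrArg (· * e) (imi (e * f))
    simp only [mul_assoc] at m ⊢
    rw [he', hf', m]
  have hinv : f * (e * f)⁻¹ * e = (e * f)⁻¹ := inv_unique h1 h2
  have hxx : (e * f)⁻¹ * (e * f)⁻¹ = (e * f)⁻¹ := by
    conv_lhs => rw [← hinv]
    have m := congrArg (· * e) (imi (e * f))
    simp only [mul_assoc] at m ⊢
    rw [m, ← mul_assoc]
    exact hinv
  have hef : e * f = (e * f)⁻¹ := by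
    conv_lhs => rw [← inv_inv' (e * f)]
    rw [idem_inv hxx]
  rw [hef]
  exact hxx

lemma idem_comm {e f : T} (he : e * e = e) (hf : f * f = f) :
    e * f = f * e := by
  have hef := idem_mul_idem he hf
  have hfe := idem_mul_idem hf he
  have he' : ∀ z : T, e * (e * z) = e * z := fun z => by rw [← mul_assoc, he]
  have hf' : ∀ z : T, f * (f * z) = f * z := fun z => by rw [← mul_assoc, hf]
  have A : (e * f) * (f * e) * (e * f) = e * f := by
    have m := hef
    simp only [mul_assoc] at m ⊢
    rw [hf', he']
    exact m
  have B : (f * e) * (e * f) * (f * e) = f * e := by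
    have m := hfe
    simp only [mul_assoc] at m ⊢
    rw [he', hf']
    exact m
  have : f * e = (e * f)⁻¹ := inv_unique A B
  rw [this, idem_inv hef]

lemma mul_inv_rev' (a b : T) : (a * b)⁻¹ = b⁻¹ * a⁻¹ := by
  have comm := idem_comm (ran_idem b) (dom_idem a)
  have H1 : (a * b) * (b⁻¹ * a⁻¹) * (a * b) = a * b := by
    have c' := congrArg (· * b) comm
    simp only [mul_assoc] at c' ⊢
    rw [c', mim', mimn]
  have H2 : (b⁻¹ * a⁻¹) * (a * b) * (b⁻¹ * a⁻¹) = b⁻¹ * a⁻¹ := by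
    have c' := congrArg (· * a⁻¹) comm.symm
    simp only [mul_assoc] at c' ⊢
    rw [c', imi', imin]
  exact (inv_unique H1 H2).symm

lemma isInvPair_inv (a : T) : IsInvPair a a⁻¹ := ⟨mim a, imi a⟩

lemma isInvPair_unique {a b : T} (h : IsInvPair a b) : b = a⁻¹ :=
  inv_unique h.1 h.2

end InverseSemigroup

/-- weak reductivity, in any semigroup with an "inverse-like" operation -/
lemma weak_red {M : Type*} [Semigroup M] [Inv M]
    (hmim : ∀ a : M, a * a⁻¹ * a = a) {t t' : M}
    (h : ∀ s, t * s = t' * s) (h' : ∀ s, s * t = s * t') : t = t' := by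
  have hmimn : ∀ a : M, a * (a⁻¹ * a) = a := fun a => by rw [← mul_assoc, hmim]
  have i : t = t' * (t⁻¹ * t) := by rw [← h (t⁻¹ * t), hmimn]
  have ii : (t' * t'⁻¹) * t = t' := by rw [h' (t' * t'⁻¹)]; exact hmim t'
  calc t = t' * (t⁻¹ * t) := i
  _ = ((t' * t'⁻¹) * t) * (t⁻¹ * t) := by rw [ii]
  _ = (t' * t'⁻¹) * (t * (t⁻¹ * t)) := by rw [mul_assoc]
  _ = (t' * t'⁻¹) * t := by rw [hmimn]
  _ = t' := ii

end InvLemmas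
section BitransInv

open InverseSemigroup

variable {S : Type*} [InverseSemigroup S]

/-- The candidate inverse of a bitranslation. -/
def Bitrans.binv (ω : Bitrans S) : Bitrans S where
  l s := (ω.r s⁻¹)⁻¹
  r s := (ω.l s⁻¹)⁻¹
  l_mul s t := by
    show (ω.r (s * t)⁻¹)⁻¹ = (ω.r s⁻¹)⁻¹ * t
    rw [mul_inv_rev', ω.r_mul, mul_inv_rev', inv_inv']
  r_mul s t := by
    show (ω.l (s * t)⁻¹)⁻¹ = s * (ω.l t⁻¹)⁻¹
    rw [mul_inv_rev', ω.l_mul, mul_inv_rev', inv_inv']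
  linked s t := by
    have h := congrArg (·⁻¹) (ω.linked t⁻¹ s⁻¹)
    simp only [mul_inv_rev', inv_inv'] at h
    exact h.symm

instance : Inv (Bitrans S) := ⟨Bitrans.binv⟩

lemma Bitrans.inv_l (ω : Bitrans S) (s : S) : (ω⁻¹).l s = (ω.r s⁻¹)⁻¹ := rfl
lemma Bitrans.inv_r (ω : Bitrans S) (s : S) : (ω⁻¹).r s = (ω.l s⁻¹)⁻¹ := rfl
lemma Bitrans.mul_l (ω τ : Bitrans S) (s : S) : (ω * τ).l s = ω.l (τ.l s) := rfl
lemma Bitrans.mul_r (ω τ : Bitrans S) (s : S) : (ω * τ).r s = τ.r (ω.r s) := rfl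

/-- Key lemma (K2): `ρ((λ e)⁻¹) = (λ e)⁻¹ (λ e)` for an idempotent `e`. -/
lemma Bitrans.K2 (ω : Bitrans S) {e : S} (he : e * e = e) :
    ω.r ((ω.l e)⁻¹) = (ω.l e)⁻¹ * ω.l e := by
  have hke : ω.l e = ω.r (ω.l e * (ω.l e)⁻¹) * e := by
    have h := ω.linked (ω.l e * (ω.l e)⁻¹) e
    rw [mim] at h
    exact h
  set c := ω.l e with hc
  set k := ω.r (c * c⁻¹) with hk
  have hcinv : c⁻¹ = e * k⁻¹ := by
    conv_lhs => rw [hke]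
    rw [mul_inv_rev', idem_inv he]
  have h1 : ω.r c⁻¹ = c⁻¹ * k := by
    conv_lhs => rw [show c⁻¹ = c⁻¹ * (c * c⁻¹) from (imin c).symm]
    rw [ω.r_mul]
  rw [h1]
  conv_lhs => rw [hcinv]
  conv_rhs => rw [hcinv, hke]
  -- ⊢ e * k⁻¹ * k = e * k⁻¹ * (k * e)
  have comm := idem_comm (dom_idem k) he
  simp only [mul_assoc]
  rw [← mul_assoc k⁻¹ k e, comm, ← mul_assoc e e, he]

/-- Key lemma (K2'): `λ((ρ e)⁻¹) = (ρ e)(ρ e)⁻¹` for an idempotent `e`. -/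
lemma Bitrans.K2' (ω : Bitrans S) {e : S} (he : e * e = e) :
    ω.l ((ω.r e)⁻¹) = ω.r e * (ω.r e)⁻¹ := by
  have hke : ω.r e = e * ω.l ((ω.r e)⁻¹ * ω.r e) := by
    have h := ω.linked e ((ω.r e)⁻¹ * ω.r e)
    rw [mimn] at h
    exact h.symm
  set d := ω.r e with hd
  set k := ω.l (d⁻¹ * d) with hk
  have hdinv : d⁻¹ = k⁻¹ * e := by
    conv_lhs => rw [hke]
    rw [mul_inv_rev', idem_inv he]
  have h1 : ω.l d⁻¹ = k * d⁻¹ := by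
    conv_lhs => rw [show d⁻¹ = (d⁻¹ * d) * d⁻¹ from imi d |>.symm]
    rw [ω.l_mul]
  rw [h1]
  conv_lhs => rw [hdinv]
  conv_rhs => rw [hdinv, hke]
  -- ⊢ k * (k⁻¹ * e) = e * k * (k⁻¹ * e)
  have comm := idem_comm (ran_idem k) he
  simp only [mul_assoc]
  rw [← mul_assoc k k⁻¹ e, comm, ← mul_assoc e e, he]
lemma Bitrans.l_decomp (ω : Bitrans S) (s : S) : ω.l s = ω.l (s * s⁻¹) * s := by
  conv_lhs => rw [show s = s * s⁻¹ * s from (mim s).symm, ω.l_mul]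

lemma Bitrans.r_decomp (ω : Bitrans S) (s : S) : ω.r s = s * ω.r (s⁻¹ * s) := by
  conv_lhs => rw [show s = s * (s⁻¹ * s) from (mimn s).symm, ω.r_mul]

lemma Bitrans.l_idem_absorb (ω : Bitrans S) {e : S} (he : e * e = e) :
    ω.l e = ω.l e * e := by
  conv_lhs => rw [← he, ω.l_mul]

lemma Bitrans.r_idem_absorb (ω : Bitrans S) {e : S} (he : e * e = e) :
    ω.r e = e * ω.r e := by
  conv_lhs => rw [← he, ω.r_mul]

lemma Bitrans.mul_inv_mul_bt (ω : Bitrans S) : ω * ω⁻¹ * ω = ω := by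
  ext s
  · show ω.l ((ω⁻¹).l (ω.l s)) = ω.l s
    rw [Bitrans.inv_l]
    obtain ⟨c, hc⟩ : ∃ c, ω.l (s * s⁻¹) = c := ⟨_, rfl⟩
    have he := ran_idem s
    have hce : c = c * (s * s⁻¹) := by rw [← hc]; exact ω.l_idem_absorb he
    have hK2 : ω.r c⁻¹ = c⁻¹ * c := by rw [← hc]; exact ω.K2 he
    have hdec : ω.l s = c * s := by rw [← hc]; exact ω.l_decomp s
    have hstep : ω.r ((ω.l s)⁻¹) = s⁻¹ * (c⁻¹ * c) := by
      rw [hdec, mul_inv_rev', ω.r_mul, hK2]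
    have hlcinv : ω.l c⁻¹ = c * c⁻¹ := by
      conv_lhs => rw [hce]
      rw [mul_inv_rev', idem_inv he, ω.l_mul, hc]
    rw [hstep, mul_inv_rev', idem_inv (dom_idem c), inv_inv', mul_assoc, ω.l_mul,
      hlcinv, hdec, ← mul_assoc, mim]
  · show ω.r ((ω⁻¹).r (ω.r s)) = ω.r s
    rw [Bitrans.inv_r]
    obtain ⟨d, hd⟩ : ∃ d, ω.r (s⁻¹ * s) = d := ⟨_, rfl⟩
    have he := dom_idem s
    have hde : d = (s⁻¹ * s) * d := by rw [← hd]; exact ω.r_idem_absorb he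
    have hK2' : ω.l d⁻¹ = d * d⁻¹ := by rw [← hd]; exact ω.K2' he
    have hdec : ω.r s = s * d := by rw [← hd]; exact ω.r_decomp s
    have hstep : ω.l ((ω.r s)⁻¹) = (d * d⁻¹) * s⁻¹ := by
      rw [hdec, mul_inv_rev', ω.l_mul, hK2']
    have hrdinv : ω.r d⁻¹ = d⁻¹ * d := by
      conv_lhs => rw [hde]
      rw [mul_inv_rev', idem_inv he, ω.r_mul, hd]
    rw [hstep, mul_inv_rev', inv_inv', idem_inv (ran_idem d), ω.r_mul, ω.r_mul,
      hrdinv, mimn, hdec]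

lemma Bitrans.inv_inv_bt (ω : Bitrans S) : ω⁻¹⁻¹ = ω := by
  ext s
  · show ((ω.l s⁻¹⁻¹)⁻¹)⁻¹ = ω.l s
    rw [inv_inv', inv_inv']
  · show ((ω.r s⁻¹⁻¹)⁻¹)⁻¹ = ω.r s
    rw [inv_inv', inv_inv']

lemma Bitrans.inv_mul_inv_bt (ω : Bitrans S) : ω⁻¹ * ω * ω⁻¹ = ω⁻¹ := by
  have h := Bitrans.mul_inv_mul_bt ω⁻¹
  rw [Bitrans.inv_inv_bt] at h
  exact h

lemma Bitrans.mul_inv_rev_bt (ω τ : Bitrans S) : (ω * τ)⁻¹ = τ⁻¹ * ω⁻¹ := by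
  ext s
  · show (τ.r (ω.r s⁻¹))⁻¹ = (τ.r ((ω.r s⁻¹)⁻¹⁻¹))⁻¹
    rw [inv_inv']
  · show (ω.l (τ.l s⁻¹))⁻¹ = (ω.l ((τ.l s⁻¹)⁻¹⁻¹))⁻¹
    rw [inv_inv']

/-- For an idempotent bitranslation, `λ e = ρ e` is idempotent, for `e` idempotent. -/
lemma Bitrans.idem_diag {ε : Bitrans S} (hε : ε * ε = ε) {e : S} (he : e * e = e) :
    ε.l e = ε.r e ∧ ε.l e * ε.l e = ε.l e := by
  have hll : ∀ x, ε.l (ε.l x) = ε.l x := fun x => congrFun (congrArg Bitrans.l hε) x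
  have hrr : ∀ x, ε.r (ε.r x) = ε.r x := fun x => congrFun (congrArg Bitrans.r hε) x
  obtain ⟨c, hc⟩ : ∃ c, ε.l e = c := ⟨_, rfl⟩
  obtain ⟨d, hd⟩ : ∃ d, ε.r e = d := ⟨_, rfl⟩
  have F1 : c = c * e := by rw [← hc]; exact ε.l_idem_absorb he
  have F2 : d = e * d := by rw [← hd]; exact ε.r_idem_absorb he
  have F3 : ε.r c⁻¹ = c⁻¹ * c := by rw [← hc]; exact ε.K2 he
  have F4 : ε.l d⁻¹ = d * d⁻¹ := by rw [← hd]; exact ε.K2' he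
  have F5 : ε.r c = c * d := by
    conv_lhs => rw [F1]
    rw [ε.r_mul, hd]
  have F6 : ε.l d = c * d := by
    conv_lhs => rw [F2]
    rw [ε.l_mul, hc]
  have F7 : c * d = c := by
    have h1 := hrr c⁻¹
    rw [F3] at h1
    have h2 : ε.r (c⁻¹ * c) = c⁻¹ * (c * d) := by rw [ε.r_mul, F5]
    have h3 : c * (c⁻¹ * (c * d)) = c * (c⁻¹ * c) :=
      congrArg (c * ·) (h2.symm.trans h1)
    rw [mim', mimn] at h3
    exact h3
  have F8 : ε.l d = d := by
    have h5 : ε.l (d⁻¹ * d) = d := by rw [ε.l_mul, F4, mim]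
    have h6 := hll (d⁻¹ * d)
    rw [h5] at h6
    exact h6
  have F9 : c = d := by rw [← F7, ← F6, F8]
  have F10 : c * c = c := by rw [← F9] at F7; exact F7
  exact ⟨by rw [hc, hd, F9], by rw [hc, F10]⟩

lemma Bitrans.idem_inv_eq {ε : Bitrans S} (hε : ε * ε = ε) : ε⁻¹ = ε := by
  ext s
  · show (ε.r s⁻¹)⁻¹ = ε.l s
    obtain ⟨heq, hidem⟩ := Bitrans.idem_diag hε (ran_idem s)
    have h1 : ε.r s⁻¹ = s⁻¹ * ε.r (s * s⁻¹) := by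
      conv_lhs => rw [ε.r_decomp s⁻¹]
      rw [inv_inv']
    rw [h1, ← heq, mul_inv_rev', idem_inv hidem, inv_inv', ← ε.l_decomp]
  · show (ε.l s⁻¹)⁻¹ = ε.r s
    obtain ⟨heq, hidem⟩ := Bitrans.idem_diag hε (dom_idem s)
    have h1 : ε.l s⁻¹ = ε.l (s⁻¹ * s) * s⁻¹ := by
      conv_lhs => rw [ε.l_decomp s⁻¹]
      rw [inv_inv']
    rw [h1, mul_inv_rev', inv_inv', idem_inv, heq, ← ε.r_decomp]
    exact hidem

lemma Bitrans.idem_comm_bt {ε φ : Bitrans S} (hε : ε * ε = ε) (hφ : φ * φ = φ) :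
    ε * φ = φ * ε := by
  have hidem : (ε * φ) * (ε * φ) = ε * φ := by
    have h := Bitrans.mul_inv_mul_bt (ε * φ)
    rw [Bitrans.mul_inv_rev_bt, Bitrans.idem_inv_eq hε, Bitrans.idem_inv_eq hφ] at h
    calc (ε * φ) * (ε * φ)
        = ε * (φ * φ) * (ε * ε) * φ := by rw [hφ, hε]; simp only [mul_assoc]
      _ = ε * φ * (φ * ε) * (ε * φ) := by simp only [mul_assoc]
      _ = ε * φ := h
  have h2 := Bitrans.idem_inv_eq hidem
  rw [Bitrans.mul_inv_rev_bt, Bitrans.idem_inv_eq hε, Bitrans.idem_inv_eq hφ] at h2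
  exact h2.symm
/-- In a semigroup with commuting idempotents, inverses are unique. -/
lemma two_inv_eq {M : Type*} [Semigroup M]
    (hcomm : ∀ e f : M, e * e = e → f * f = f → e * f = f * e)
    {a x y : M} (hx1 : a * x * a = a) (hx2 : x * a * x = x)
    (hy1 : a * y * a = a) (hy2 : y * a * y = y) : x = y := by
  have key : ∀ {u v : M}, a * u * a = a → u * a * u = u →
      a * v * a = a → v * a * v = v → u = u * (a * v) := by
    intro u v hu1 hu2 hv1 hv2
    have hav : (a * v) * (a * v) = a * v := by
      rw [mul_assoc a v (a * v), ← mul_assoc v a v, hv2]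
    have hau : (a * u) * (a * u) = a * u := by
      rw [mul_assoc a u (a * u), ← mul_assoc u a u, hu2]
    have e1 : u * a * u = u * (a * v * a) * u := by rw [hv1]
    have e2 : u * (a * v * a) * u = u * ((a * v) * (a * u)) := by
      simp only [mul_assoc]
    have e3 : u * ((a * v) * (a * u)) = u * ((a * u) * (a * v)) := by
      rw [hcomm _ _ hav hau]
    have e4 : u * ((a * u) * (a * v)) = (u * (a * u)) * (a * v) := by
      simp only [mul_assoc]
    have e5 : u * (a * u) = u := by rw [← mul_assoc]; exact hu2
    calc u = u * a * u := hu2.symm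
    _ = u * (a * v) := by rw [e1, e2, e3, e4, e5]
  have k1 : x = x * (a * y) := key hx1 hx2 hy1 hy2
  have k2 : y = y * (a * x) := key hy1 hy2 hx1 hx2
  -- also need: y = x * a * y ; use the "helper1" form
  have key2 : ∀ {u v : M}, a * u * a = a → u * a * u = u →
      a * v * a = a → v * a * v = v → u = (v * a) * u := by
    intro u v hu1 hu2 hv1 hv2
    have hva : (v * a) * (v * a) = v * a := by
      rw [mul_assoc v a (v * a), ← mul_assoc a v a, hv1]
    have hua : (u * a) * (u * a) = u * a := by
      rw [mul_assoc u a (u * a), ← mul_assoc a u a, hu1]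
    have e1 : u * a * u = u * (a * v * a) * u := by rw [hv1]
    have e2 : u * (a * v * a) * u = ((u * a) * (v * a)) * u := by
      simp only [mul_assoc]
    have e3 : ((u * a) * (v * a)) * u = ((v * a) * (u * a)) * u := by
      rw [hcomm _ _ hua hva]
    have e4 : ((v * a) * (u * a)) * u = (v * a) * (u * a * u) := by
      simp only [mul_assoc]
    calc u = u * a * u := hu2.symm
    _ = (v * a) * u := by rw [e1, e2, e3, e4, hu2]
  have k3 : y = (x * a) * y := key2 hy1 hy2 hx1 hx2
  calc x = x * (a * y) := k1
  _ = (x * a) * y := by rw [mul_assoc]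
  _ = y := k3.symm

instance : InverseSemigroup (Bitrans S) :=
  { (inferInstance : Semigroup (Bitrans S)), (inferInstance : Inv (Bitrans S)) with
    mul_inv_mul := Bitrans.mul_inv_mul_bt
    inv_mul_inv := Bitrans.inv_mul_inv_bt
    inv_unique := fun {a b} h1 h2 =>
      two_inv_eq (fun _ _ he hf => Bitrans.idem_comm_bt he hf) h1 h2
        (Bitrans.mul_inv_mul_bt a) (Bitrans.inv_mul_inv_bt a) }
end BitransInv

section QuotientInv

open InverseSemigroup

variable {S : Type*} [InverseSemigroup S] {θ : Con S}

/-- A congruence on an inverse semigroup preserves inverses. -/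
lemma con_inv_aux {a b : S} (h : θ a b) : θ b⁻¹ ((b⁻¹ * b) * a⁻¹) := by
  -- b⁻¹ θ b⁻¹ a b⁻¹ = b⁻¹ (a a⁻¹ a) b⁻¹ θ b⁻¹ a a⁻¹ b b⁻¹ = b⁻¹ a a⁻¹ θ b⁻¹ b a⁻¹
  have s1 : θ b⁻¹ (b⁻¹ * a * b⁻¹) := by
    have h0 := θ.mul (θ.mul (θ.refl b⁻¹) (θ.symm h)) (θ.refl b⁻¹)
    rw [imi] at h0
    exact h0
  have s3 : b⁻¹ * a * b⁻¹ = (b⁻¹ * a * a⁻¹) * a * b⁻¹ := by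
    simp only [mul_assoc]
    rw [mim']
  have s2 : θ ((b⁻¹ * a * a⁻¹) * a * b⁻¹) ((b⁻¹ * a * a⁻¹) * b * b⁻¹) :=
    θ.mul (θ.mul (θ.refl _) h) (θ.refl _)
  have s4 : (b⁻¹ * a * a⁻¹) * b * b⁻¹ = b⁻¹ * (a * a⁻¹) := by
    have comm := idem_comm (ran_idem a) (ran_idem b)
    have c' := congrArg (b⁻¹ * ·) comm
    simp only [mul_assoc] at c' ⊢
    rw [c', imi']
  have s5 : θ (b⁻¹ * (a * a⁻¹)) (b⁻¹ * (b * a⁻¹)) :=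
    θ.mul (θ.refl b⁻¹) (θ.mul h (θ.refl a⁻¹))
  have chain : θ b⁻¹ (b⁻¹ * (b * a⁻¹)) :=
    θ.trans (θ.trans s1 (s3 ▸ s4 ▸ s2)) s5
  rw [← mul_assoc] at chain
  exact chain

lemma con_inv {a b : S} (h : θ a b) : θ a⁻¹ b⁻¹ := by
  have I : θ b⁻¹ ((b⁻¹ * b) * a⁻¹) := con_inv_aux h
  have II : θ a⁻¹ ((a⁻¹ * a) * b⁻¹) := con_inv_aux (θ.symm h)
  have III : θ ((b⁻¹ * b) * a⁻¹) ((b⁻¹ * b) * ((a⁻¹ * a) * b⁻¹)) :=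
    θ.mul (θ.refl _) II
  have eq1 : (b⁻¹ * b) * ((a⁻¹ * a) * b⁻¹) = (a⁻¹ * a) * b⁻¹ := by
    have comm := idem_comm (dom_idem b) (dom_idem a)
    have c' := congrArg (· * b⁻¹) comm
    simp only [mul_assoc] at c' ⊢
    rw [c', imin]
  rw [eq1] at III
  exact θ.symm (θ.trans (θ.trans I III) (θ.symm II))

noncomputable instance : Inv θ.Quotient :=
  ⟨fun x => Con.liftOn x (fun s => ((s⁻¹ : S) : θ.Quotient))
    fun _ _ h => θ.eq.2 (con_inv h)⟩

lemma qinv_coe (s : S) : ((s : θ.Quotient))⁻¹ = ((s⁻¹ : S) : θ.Quotient) := rfl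

lemma q_mim (x : θ.Quotient) : x * x⁻¹ * x = x :=
  Con.induction_on x fun s => by
    rw [qinv_coe, ← Con.coe_mul, ← Con.coe_mul, mim]

lemma q_mul_inv_rev (x y : θ.Quotient) : (x * y)⁻¹ = y⁻¹ * x⁻¹ :=
  Con.induction_on₂ x y fun a b => by
    rw [← Con.coe_mul, qinv_coe, qinv_coe, qinv_coe, ← Con.coe_mul, mul_inv_rev']

lemma q_inv_inv (x : θ.Quotient) : x⁻¹⁻¹ = x :=
  Con.induction_on x fun s => by rw [qinv_coe, qinv_coe, inv_inv']

end QuotientInv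

section IndSection

open InverseSemigroup

variable {S : Type*} [InverseSemigroup S] {θ : Con S}

/-- `ω` induces the inner bitranslation of `S/θ` given by `t`. -/
def Ind (θ : Con S) (ω : Bitrans S) (t : θ.Quotient) : Prop :=
  ∀ s : S, ((ω.l s : S) : θ.Quotient) = t * (s : θ.Quotient) ∧
    ((ω.r s : S) : θ.Quotient) = (s : θ.Quotient) * t

lemma inducedInnerCon_iff {ω : Bitrans S} :
    InducedInnerCon θ ω ↔ ∃ t, Ind θ ω t := Iff.rfl

lemma ind_unique {ω : Bitrans S} {t t' : θ.Quotient}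
    (h1 : Ind θ ω t) (h2 : Ind θ ω t') : t = t' := by
  refine weak_red q_mim (fun x => ?_) (fun x => ?_)
  · exact Con.induction_on x fun s => ((h1 s).1.symm.trans (h2 s).1)
  · exact Con.induction_on x fun s => ((h1 s).2.symm.trans (h2 s).2)

lemma ind_mul {ω ω' : Bitrans S} {t t' : θ.Quotient}
    (h1 : Ind θ ω t) (h2 : Ind θ ω' t') : Ind θ (ω * ω') (t * t') := by
  intro s
  constructor
  · show ((ω.l (ω'.l s) : S) : θ.Quotient) = t * t' * (s : θ.Quotient)
    rw [(h1 (ω'.l s)).1, (h2 s).1, mul_assoc]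
  · show ((ω'.r (ω.r s) : S) : θ.Quotient) = (s : θ.Quotient) * (t * t')
    rw [(h2 (ω.r s)).2, (h1 s).2, mul_assoc]

lemma ind_inv {ω : Bitrans S} {t : θ.Quotient}
    (h : Ind θ ω t) : Ind θ ω⁻¹ t⁻¹ := by
  intro s
  constructor
  · show (((ω.r s⁻¹)⁻¹ : S) : θ.Quotient) = t⁻¹ * (s : θ.Quotient)
    rw [← qinv_coe, (h s⁻¹).2, q_mul_inv_rev, qinv_coe, inv_inv']
  · show (((ω.l s⁻¹)⁻¹ : S) : θ.Quotient) = (s : θ.Quotient) * t⁻¹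
    rw [← qinv_coe, (h s⁻¹).1, q_mul_inv_rev, qinv_coe, inv_inv']

lemma ind_inner (s : S) : Ind θ (innerBitrans s) ((s : θ.Quotient)) := by
  intro x
  exact ⟨Con.coe_mul s x, Con.coe_mul x s⟩

lemma respects_mul {ω ω' : Bitrans S} (h1 : RespectsCon θ ω)
    (h2 : RespectsCon θ ω') : RespectsCon θ (ω * ω') := fun a b hab =>
  ⟨(h1 _ _ (h2 a b hab).1).1, (h2 _ _ (h1 a b hab).2).2⟩

lemma respects_inv {ω : Bitrans S} (h : RespectsCon θ ω) :
    RespectsCon θ ω⁻¹ := fun a b hab =>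
  ⟨con_inv ((h a⁻¹ b⁻¹ (con_inv hab)).2), con_inv ((h a⁻¹ b⁻¹ (con_inv hab)).1)⟩

lemma respects_inner (s : S) : RespectsCon θ (innerBitrans s) := fun a b hab =>
  ⟨θ.mul (θ.refl s) hab, θ.mul hab (θ.refl s)⟩

lemma omegaNE_inner (s : S) : innerBitrans s ∈ OmegaNE θ :=
  ⟨respects_inner s, ⟨(s : θ.Quotient), ind_inner s⟩⟩

lemma omegaNE_mul {ω ω' : Bitrans S} (h1 : ω ∈ OmegaNE θ) (h2 : ω' ∈ OmegaNE θ) :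
    ω * ω' ∈ OmegaNE θ := by
  obtain ⟨hr1, t1, hi1⟩ := h1
  obtain ⟨hr2, t2, hi2⟩ := h2
  exact ⟨respects_mul hr1 hr2, t1 * t2, ind_mul hi1 hi2⟩

lemma omegaNE_inv {ω : Bitrans S} (h : ω ∈ OmegaNE θ) : ω⁻¹ ∈ OmegaNE θ := by
  obtain ⟨hr, t, hi⟩ := h
  exact ⟨respects_inv hr, t⁻¹, ind_inv hi⟩

lemma inner_mul (a b : S) :
    innerBitrans a * innerBitrans b = innerBitrans (a * b) := by
  ext s
  · show a * (b * s) = a * b * s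
    rw [mul_assoc]
  · show s * a * b = s * (a * b)
    rw [mul_assoc]

lemma inner_inv (a : S) : (innerBitrans a)⁻¹ = innerBitrans a⁻¹ := by
  ext s
  · show (s⁻¹ * a)⁻¹ = a⁻¹ * s
    rw [mul_inv_rev', inv_inv']
  · show (a * s⁻¹)⁻¹ = s * a⁻¹
    rw [mul_inv_rev', inv_inv']

/-- `Ω(θ)`-related elements of `Ω(S,θ)` induce equal elements. -/
lemma ind_of_omegaCon {ω ω' : Bitrans S} {t : θ.Quotient}
    (h : OmegaCon θ ω ω') (hi : Ind θ ω t) : Ind θ ω' t := fun s =>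
  ⟨(θ.eq.2 (h s).1).symm.trans (hi s).1, (θ.eq.2 (h s).2).symm.trans (hi s).2⟩

lemma omegaCon_of_ind {ω ω' : Bitrans S} {t : θ.Quotient}
    (h1 : Ind θ ω t) (h2 : Ind θ ω' t) : OmegaCon θ ω ω' := fun s =>
  ⟨θ.eq.1 ((h1 s).1.trans (h2 s).1.symm), θ.eq.1 ((h1 s).2.trans (h2 s).2.symm)⟩

end IndSection
section MainProof

open InverseSemigroup

variable {S : Type*} [InverseSemigroup S] {θ : Con S}

lemma omegaCon_symm {ω ω' : Bitrans S} (h : OmegaCon θ ω ω') : OmegaCon θ ω' ω :=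
  fun s => ⟨θ.symm (h s).1, θ.symm (h s).2⟩

open Classical in
/-- The transversal of `Ω(θ)` obtained from an almost Billhardt transversal. -/
noncomputable def zeta (θ : Con S) (ξ : θ.Quotient → Bitrans S) (ω : Bitrans S) :
    Bitrans S :=
  if h : ∃ t, Ind θ ω t then ξ h.choose else ω

lemma zeta_eq (ξ : θ.Quotient → Bitrans S) {ω : Bitrans S} {t : θ.Quotient}
    (h : Ind θ ω t) : zeta θ ξ ω = ξ t := by
  have hex : ∃ t', Ind θ ω t' := ⟨t, h⟩
  rw [zeta, dif_pos hex, ind_unique hex.choose_spec h]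

lemma forward_dir (ξ : θ.Quotient → Bitrans S) (hξ : IsAlmostBillhardt θ ξ) :
    IsInvSubOmega θ (Sbar θ ξ : Set (Bitrans S)) ∧
    IsBillhardtOn θ (Sbar θ ξ : Set (Bitrans S)) (zeta θ ξ) ∧
    ((∀ t u : θ.Quotient, ξ (t * u) = ξ t * ξ u) →
      ∀ u ∈ (Sbar θ ξ : Set (Bitrans S)), ∀ v ∈ (Sbar θ ξ : Set (Bitrans S)),
        zeta θ ξ (u * v) = zeta θ ξ u * zeta θ ξ v) := by
  obtain ⟨hresp, hB1, hB2⟩ := hξ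
  have hB1' : ∀ t, Ind θ (ξ t) t := fun t s => hB1 t s
  have hgen_sub : SbarGen θ ξ ⊆ OmegaNE θ := by
    rintro ω ((⟨s, rfl⟩ | ⟨t, rfl⟩) | ⟨t, hp⟩)
    · exact omegaNE_inner s
    · exact ⟨hresp t, t, hB1' t⟩
    · rw [isInvPair_unique hp]
      exact omegaNE_inv ⟨hresp t, t, hB1' t⟩
  have hsub : (Sbar θ ξ : Set (Bitrans S)) ⊆ OmegaNE θ := by
    intro ω hω
    exact Subsemigroup.closure_induction (fun x hx => hgen_sub hx)
      (fun x y _ _ ihx ihy => omegaNE_mul ihx ihy) hω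
  have hinv_mem : ∀ ω ∈ Sbar θ ξ, ω⁻¹ ∈ Sbar θ ξ := by
    intro ω hω
    refine Subsemigroup.closure_induction ?_ ?_ hω
    · rintro x ((⟨s, rfl⟩ | ⟨t, rfl⟩) | ⟨t, hp⟩)
      · rw [inner_inv]
        exact Subsemigroup.subset_closure (Or.inl (Or.inl ⟨s⁻¹, rfl⟩))
      · exact Subsemigroup.subset_closure (Or.inr ⟨t, isInvPair_inv (ξ t)⟩)
      · rw [isInvPair_unique hp, inv_inv']
        exact Subsemigroup.subset_closure (Or.inl (Or.inr ⟨t, rfl⟩))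
    · intro x y _ _ ihx ihy
      rw [mul_inv_rev']
      exact Subsemigroup.mul_mem _ ihy ihx
  have hInvSub : IsInvSubOmega θ (Sbar θ ξ : Set (Bitrans S)) :=
    ⟨hsub, fun π hπ => Subsemigroup.subset_closure (Or.inl (Or.inl hπ)),
      fun x hx y hy => Subsemigroup.mul_mem _ hx hy,
      fun x hx => ⟨x⁻¹, hinv_mem x hx, isInvPair_inv x⟩⟩
  refine ⟨hInvSub, ⟨?_, ?_, ?_⟩, ?_⟩
  · -- clause 1
    intro u hu
    obtain ⟨_, t, hit⟩ := hsub hu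
    rw [zeta_eq ξ hit]
    exact ⟨Subsemigroup.subset_closure (Or.inl (Or.inr ⟨t, rfl⟩)),
      omegaCon_of_ind (hB1' t) hit⟩
  · -- clause 2
    intro u hu v _ hcon
    obtain ⟨_, t, hit⟩ := hsub hu
    rw [zeta_eq ξ hit, zeta_eq ξ (ind_of_omegaCon hcon hit)]
  · -- clause 3
    intro u hu ui ζi huipair hζipair
    obtain ⟨_, t, hit⟩ := hsub hu
    have hζu : zeta θ ξ u = ξ t := zeta_eq ξ hit
    have hui : ui = u⁻¹ := isInvPair_unique huipair
    refine ⟨ui * u, Subsemigroup.mul_mem _ (hui ▸ hinv_mem u hu) hu, ?_, ?_⟩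
    · rw [hui]; exact dom_idem u
    · by_cases hr : u ∈ Set.range ξ
      · obtain ⟨t', rfl⟩ := hr
        obtain rfl : t = t' := ind_unique hit (hB1' t')
        have hζi : ζi = (ξ t)⁻¹ := isInvPair_unique (hζu ▸ hζipair)
        rw [hζu, hζi, hui]
        exact (dom_idem (ξ t)).symm
      · rw [hζu] at hζipair ⊢
        obtain ⟨e, _, _, heq⟩ := hB2 u hu hr t hit ζi ui hζipair huipair
        have hX : (ζi * ξ t) * (ζi * ξ t) = ζi * ξ t := by
          have h := congrArg (ζi * ·) hζipair.1
          simp only [mul_assoc] at h ⊢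
          exact h
        calc ui * u = e * (ζi * ξ t) := heq
        _ = e * ((ζi * ξ t) * (ζi * ξ t)) := by rw [hX]
        _ = (e * (ζi * ξ t)) * (ζi * ξ t) := (mul_assoc e (ζi * ξ t) (ζi * ξ t)).symm
        _ = (ui * u) * (ζi * ξ t) := by rw [← heq]
  · -- split clause
    intro hmul u hu v hv
    obtain ⟨_, tu, hitu⟩ := hsub hu
    obtain ⟨_, tv, hitv⟩ := hsub hv
    rw [zeta_eq ξ (ind_mul hitu hitv), zeta_eq ξ hitu, zeta_eq ξ hitv, hmul]

/-- A representative of a `θ`-class. -/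
noncomputable def qrep (θ : Con S) (t : θ.Quotient) : S :=
  (Con.induction_on t (fun s => ⟨s, rfl⟩) : ∃ s : S, (s : θ.Quotient) = t).choose

lemma qrep_spec (θ : Con S) (t : θ.Quotient) : ((qrep θ t : S) : θ.Quotient) = t :=
  Exists.choose_spec
    (Con.induction_on t (fun s => ⟨s, rfl⟩) : ∃ s : S, (s : θ.Quotient) = t)

lemma backward_dir (St : Set (Bitrans S)) (ζ : Bitrans S → Bitrans S)
    (hSub : IsInvSubOmega θ St) (hζ : IsBillhardtOn θ St ζ) :
    IsAlmostBillhardt θ (fun t => ζ (innerBitrans (qrep θ t))) ∧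
    ((∀ u ∈ St, ∀ v ∈ St, ζ (u * v) = ζ u * ζ v) →
      ∀ t u : θ.Quotient,
        ζ (innerBitrans (qrep θ (t * u))) =
          ζ (innerBitrans (qrep θ t)) * ζ (innerBitrans (qrep θ u))) := by
  obtain ⟨hOme, hInner, hMul, hInv⟩ := hSub
  obtain ⟨h1, h2, h3⟩ := hζ
  have hinnerSt : ∀ s : S, innerBitrans s ∈ St := fun s => hInner ⟨s, rfl⟩
  set ξ : θ.Quotient → Bitrans S := fun t => ζ (innerBitrans (qrep θ t)) with hξdef
  have hξSt : ∀ t, ξ t ∈ St := fun t => (h1 _ (hinnerSt _)).1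
  have hindrep : ∀ t : θ.Quotient, Ind θ (innerBitrans (qrep θ t)) t := by
    intro t
    have h := ind_inner (θ := θ) (qrep θ t)
    rw [qrep_spec] at h
    exact h
  have hξind : ∀ t, Ind θ (ξ t) t := fun t =>
    ind_of_omegaCon (omegaCon_symm (h1 _ (hinnerSt (qrep θ t))).2) (hindrep t)
  have hSbarSt : (Sbar θ ξ : Set (Bitrans S)) ⊆ St := by
    intro ω hω
    refine Subsemigroup.closure_induction ?_ (fun x y _ _ ihx ihy => hMul x ihx y ihy) hω
    rintro x ((⟨s, rfl⟩ | ⟨t, rfl⟩) | ⟨t, hp⟩)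
    · exact hinnerSt s
    · exact hξSt t
    · obtain ⟨y, hySt, hypair⟩ := hInv (ξ t) (hξSt t)
      have : x = y := (isInvPair_unique hp).trans (isInvPair_unique hypair).symm
      rw [this]; exact hySt
  constructor
  · refine ⟨fun t => (hOme (hξSt t)).1, fun t s => hξind t s, ?_⟩
    intro ω hω _ t hind ξi ωi hξipair hωipair
    have hωSt : ω ∈ St := hSbarSt hω
    have hζω : ζ ω = ξ t :=
      h2 ω hωSt _ (hinnerSt (qrep θ t)) (omegaCon_of_ind hind (hindrep t))
    obtain ⟨e, heSt, heIdem, heq⟩ :=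
      h3 ω hωSt ωi ξi hωipair (by rw [hζω]; exact hξipair)
    refine ⟨e, hOme heSt, heIdem, ?_⟩
    rw [heq, hζω]
  · intro hζmul t u
    have hcc : θ (qrep θ (t * u)) (qrep θ t * qrep θ u) := by
      refine θ.eq.1 ?_
      rw [Con.coe_mul, qrep_spec, qrep_spec, qrep_spec]
    have hcon : OmegaCon θ (innerBitrans (qrep θ (t * u)))
        (innerBitrans (qrep θ t * qrep θ u)) := fun s =>
      ⟨θ.mul hcc (θ.refl s), θ.mul (θ.refl s) hcc⟩
    calc ζ (innerBitrans (qrep θ (t * u)))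
        = ζ (innerBitrans (qrep θ t * qrep θ u)) :=
          h2 _ (hinnerSt _) _ (hinnerSt _) hcon
      _ = ζ (innerBitrans (qrep θ t) * innerBitrans (qrep θ u)) := by
          rw [inner_mul]
      _ = ζ (innerBitrans (qrep θ t)) * ζ (innerBitrans (qrep θ u)) :=
          hζmul _ (hinnerSt _) _ (hinnerSt _)

end MainProof
/-- a congruence `θ` on an inverse semigroup `S` is an almost
Billhardt (resp. split almost Billhardt) congruence iff there exists an
inverse subsemigroup `S̃` of `Ω(S,θ)` containing `Π(S)` such that the
restriction of `Ω(θ)` to `S̃` is a Billhardt (resp. split Billhardt)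
congruence on `S̃`. -/
theorem almost_billhardt_iff_billhardt_on_subsemigroup {S : Type*}
    [InverseSemigroup S] (θ : Con S) :
    ((∃ ξ : θ.Quotient → Bitrans S, IsAlmostBillhardt θ ξ) ↔
      (∃ St : Set (Bitrans S), IsInvSubOmega θ St ∧
        ∃ ζ : Bitrans S → Bitrans S, IsBillhardtOn θ St ζ)) ∧
    ((∃ ξ : θ.Quotient → Bitrans S, IsAlmostBillhardt θ ξ ∧
        ∀ t u : θ.Quotient, ξ (t * u) = ξ t * ξ u) ↔
      (∃ St : Set (Bitrans S), IsInvSubOmega θ St ∧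
        ∃ ζ : Bitrans S → Bitrans S, IsBillhardtOn θ St ζ ∧
          ∀ u ∈ St, ∀ v ∈ St, ζ (u * v) = ζ u * ζ v)) := by
  constructor
  · constructor
    · rintro ⟨ξ, hξ⟩
      obtain ⟨hSub, hBill, -⟩ := forward_dir ξ hξ
      exact ⟨(Sbar θ ξ : Set (Bitrans S)), hSub, zeta θ ξ, hBill⟩
    · rintro ⟨St, hSub, ζ, hζ⟩
      exact ⟨fun t => ζ (innerBitrans (qrep θ t)), (backward_dir St ζ hSub hζ).1⟩
  · constructor
    · rintro ⟨ξ, hξ, hξmul⟩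
      obtain ⟨hSub, hBill, hsplit⟩ := forward_dir ξ hξ
      exact ⟨(Sbar θ ξ : Set (Bitrans S)), hSub, zeta θ ξ, hBill, hsplit hξmul⟩
    · rintro ⟨St, hSub, ζ, hζ, hζmul⟩
      obtain ⟨h1, h2⟩ := backward_dir St ζ hSub hζ
      exact ⟨fun t => ζ (innerBitrans (qrep θ t)), h1, h2 hζmul⟩
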